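/- arXiv:2104.14900 — 3 statements merged into one kernel-verified Lean document; each statement's English description precedes it below -/
import Mathlib

section
/- Let G1 and G2 be the empirical state-action measures generated from a one-step policy profile (h^1,…,h^N) ∈ H^N and from its average profile (ĥ,…,ĥ) with ĥ(x)(u) = (1/N) ∑_{i=1}^N h^i(x)(u), respectively, defined on a common probability space with arbitrary joint distribution but the specified marginals. Then E[‖G1 − G2‖₁²]^{1/2} ≤ |X|·|U|/√N. -/
/-!
STATEMENT 5: Let G1 and G2 be the empirical state-action measures generated from a
one-step policy profile (h¹,…,hᴺ) ∈ 𝓗ᴺ and from its average profile (ĥ,…,ĥ) with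
ĥ(x)(u) = (1/N) ∑ᵢ hⁱ(x)(u), respectively, defined on a common probability space with
arbitrary joint distribution but the specified marginals.
Then E[‖G1 − G2‖₁²]^{1/2} ≤ |X|·|U|/√N.
-/

open MeasureTheory ProbabilityTheory Finset

/-- The empirical state-action measure `G^N(ω)(x,u) = (1/N) ∑ᵢ 1{(xⁱ(ω),uⁱ(ω)) = (x,u)}`. -/
noncomputable def empMeasure {X U : Type*} [Fintype X] [Fintype U] [DecidableEq X]
    [DecidableEq U] {Ω : Type*} (N : ℕ) (Xr : Fin N → Ω → X) (Ur : Fin N → Ω → U)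
    (ω : Ω) (p : X × U) : ℝ :=
  (N : ℝ)⁻¹ * ∑ i, if (Xr i ω, Ur i ω) = p then 1 else 0

/-! Each coordinate `G(x, u)` of an empirical measure is an average of `N` independent
indicators, so its variance is at most `1/(4N)`. Both profiles have the same average marginal
`N⁻¹ ∑ᵢ μ₀(x) hⁱ(x)(u)`, so `G1(x, u)` and `G2(x, u)` have the same mean, and under any
coupling `E[(G1 - G2)(x, u)²] ≤ 2 Var G1(x, u) + 2 Var G2(x, u) ≤ 1/N`. Cauchy–Schwarz over
the `|X|·|U|` coordinates then gives `E[‖G1 - G2‖₁²] ≤ (|X|·|U|)²/N`. -/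

section EmpiricalFreq

variable {Ω ι V : Type*}

noncomputable def empiricalFreq [Fintype ι] (Z : ι → Ω → V) (v : V) : Ω → ℝ :=
  (Fintype.card ι : ℝ)⁻¹ • ∑ i, (Z i ⁻¹' {v}).indicator 1

lemma empMeasure_eq_empiricalFreq {X U : Type*} [Fintype X] [Fintype U] [DecidableEq X]
    [DecidableEq U] {N : ℕ} (Xr : Fin N → Ω → X) (Ur : Fin N → Ω → U) (ω : Ω) (p : X × U) :
    empMeasure N Xr Ur ω p = empiricalFreq (fun i ω => (Xr i ω, Ur i ω)) p ω := by
  rw [empMeasure, empiricalFreq, Pi.smul_apply, smul_eq_mul, Fintype.card_fin, Finset.sum_apply]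
  congr 1
  refine sum_congr rfl fun i _ => ?_
  by_cases hp : (Xr i ω, Ur i ω) = p <;> simp [hp]

variable [MeasurableSpace Ω] {P : Measure Ω}

lemma variance_indicator_one_le [IsProbabilityMeasure P] {s : Set Ω} (hs : MeasurableSet s) :
    Var[s.indicator 1; P] ≤ 1 / 4 := by
  have hmem : ∀ ω, s.indicator (1 : Ω → ℝ) ω ∈ Set.Icc 0 1 := fun ω => by
    by_cases hω : ω ∈ s <;> simp [hω]
  calc _ ≤ ((1 - 0) / 2) ^ 2 :=
        variance_le_sq_of_bounded (ae_of_all P hmem) (measurable_one.indicator hs).aemeasurable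
    _ = 1 / 4 := by norm_num

lemma integral_sq_sub_le_of_integral_eq [IsFiniteMeasure P] {f g : Ω → ℝ} (hf : MemLp f 2 P)
    (hg : MemLp g 2 P) (hfg : P[f] = P[g]) :
    ∫ ω, (f ω - g ω) ^ 2 ∂P ≤ 2 * Var[f; P] + 2 * Var[g; P] := by
  set m := P[f]
  have hsq : ∀ {k : Ω → ℝ}, MemLp k 2 P → Integrable (fun ω => (k ω - m) ^ 2) P :=
    fun hk => (hk.sub (memLp_const m)).integrable_sq
  rw [variance_eq_integral hf.aemeasurable, variance_eq_integral hg.aemeasurable, ← hfg,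
    ← integral_const_mul, ← integral_const_mul, ← integral_add ((hsq hf).const_mul 2)
    ((hsq hg).const_mul 2)]
  refine integral_mono_of_nonneg (ae_of_all _ fun ω => sq_nonneg _)
    (((hsq hf).const_mul 2).add ((hsq hg).const_mul 2)) (ae_of_all _ fun ω => ?_)
  nlinarith [sq_nonneg (f ω + g ω - 2 * m)]

lemma integral_sq_sum_abs_le {α : Type*} [Fintype α] {D : α → Ω → ℝ} (hD : ∀ a, MemLp (D a) 2 P)
    {c : ℝ} (hc : ∀ a, ∫ ω, D a ω ^ 2 ∂P ≤ c) :
    ∫ ω, (∑ a, |D a ω|) ^ 2 ∂P ≤ (Fintype.card α : ℝ) ^ 2 * c := by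
  have hint : ∀ a, Integrable (fun ω => D a ω ^ 2) P := fun a => (hD a).integrable_sq
  calc ∫ ω, (∑ a, |D a ω|) ^ 2 ∂P
      ≤ ∫ ω, Fintype.card α * ∑ a, D a ω ^ 2 ∂P := by
        refine integral_mono_of_nonneg (ae_of_all _ fun ω => sq_nonneg _)
          ((integrable_finsetSum _ fun a _ => hint a).const_mul _) (ae_of_all _ fun ω => ?_)
        simpa only [sq_abs, card_univ] using
          sq_sum_le_card_mul_sum_sq (s := univ) (f := fun a => |D a ω|)
    _ = Fintype.card α * ∑ a, ∫ ω, D a ω ^ 2 ∂P := by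
        rw [integral_const_mul, integral_finsetSum _ fun a _ => hint a]
    _ ≤ Fintype.card α * ∑ _a : α, c := by gcongr with a; exact hc a
    _ = (Fintype.card α : ℝ) ^ 2 * c := by rw [sum_const, card_univ, nsmul_eq_mul]; ring

variable [MeasurableSpace V] [MeasurableSingletonClass V] {Z Z' : ι → Ω → V}

lemma memLp_indicator_preimage_singleton [IsFiniteMeasure P] (hZ : ∀ i, Measurable (Z i))
    (i : ι) (v : V) : MemLp ((Z i ⁻¹' {v}).indicator (1 : Ω → ℝ)) 2 P :=
  memLp_indicator_const 2 (hZ i (measurableSet_singleton v)) 1 (Or.inr (measure_ne_top _ _))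

variable [Fintype ι]

lemma memLp_empiricalFreq [IsFiniteMeasure P] (hZ : ∀ i, Measurable (Z i)) (v : V) :
    MemLp (empiricalFreq Z v) 2 P :=
  (memLp_finsetSum' univ fun i _ => memLp_indicator_preimage_singleton hZ i v).const_smul _

lemma integral_empiricalFreq [IsFiniteMeasure P] (hZ : ∀ i, Measurable (Z i)) (v : V) :
    P[empiricalFreq Z v] = (Fintype.card ι : ℝ)⁻¹ * ∑ i, P.real (Z i ⁻¹' {v}) := by
  simp only [empiricalFreq, Pi.smul_apply, Finset.sum_apply]
  rw [integral_smul, integral_finsetSum _ fun i _ =>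
    (memLp_indicator_preimage_singleton hZ i v).integrable one_le_two, smul_eq_mul]
  simp only [integral_indicator_one (hZ _ (measurableSet_singleton v))]

lemma variance_empiricalFreq_le [IsProbabilityMeasure P] (hZ : ∀ i, Measurable (Z i))
    (hindep : Pairwise fun i j => IndepFun (Z i) (Z j) P) (v : V) :
    Var[empiricalFreq Z v; P] ≤ (Fintype.card ι : ℝ)⁻¹ / 4 := by
  have hcomp : ∀ k, (Z k ⁻¹' {v}).indicator (1 : Ω → ℝ) = ({v} : Set V).indicator 1 ∘ Z k :=
    fun k => funext fun ω => Set.indicator_comp_right (g := (1 : V → ℝ)) (Z k)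
  have hpair : Set.Pairwise ↑(univ : Finset ι) fun i j =>
      IndepFun ((Z i ⁻¹' {v}).indicator (1 : Ω → ℝ)) ((Z j ⁻¹' {v}).indicator 1) P :=
    fun i _ j _ hij => by
      dsimp only
      rw [hcomp, hcomp]
      exact (hindep hij).comp (measurable_one.indicator (measurableSet_singleton v))
        (measurable_one.indicator (measurableSet_singleton v))
  rw [empiricalFreq, variance_smul,
    IndepFun.variance_sum (fun i _ => memLp_indicator_preimage_singleton hZ i v) hpair]
  calc ((Fintype.card ι : ℝ)⁻¹) ^ 2 * ∑ i, Var[(Z i ⁻¹' {v}).indicator 1; P]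
      ≤ ((Fintype.card ι : ℝ)⁻¹) ^ 2 * ∑ _i : ι, (1 / 4 : ℝ) := by
        gcongr with i
        exact variance_indicator_one_le (hZ i (measurableSet_singleton v))
    _ = (Fintype.card ι : ℝ)⁻¹ / 4 := by
        rw [sum_const, card_univ, nsmul_eq_mul]
        rcases eq_or_ne (Fintype.card ι : ℝ) 0 with h | h
        · simp [h]
        · field_simp

lemma integral_sq_sub_empiricalFreq_le [IsProbabilityMeasure P] (hZ : ∀ i, Measurable (Z i))
    (hZ' : ∀ i, Measurable (Z' i)) (hindep : Pairwise fun i j => IndepFun (Z i) (Z j) P)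
    (hindep' : Pairwise fun i j => IndepFun (Z' i) (Z' j) P) {v : V}
    (hmean : ∑ i, P.real (Z i ⁻¹' {v}) = ∑ i, P.real (Z' i ⁻¹' {v})) :
    ∫ ω, (empiricalFreq Z v ω - empiricalFreq Z' v ω) ^ 2 ∂P ≤ (Fintype.card ι : ℝ)⁻¹ := by
  have hfg : P[empiricalFreq Z v] = P[empiricalFreq Z' v] := by
    rw [integral_empiricalFreq hZ, integral_empiricalFreq hZ', hmean]
  calc ∫ ω, (empiricalFreq Z v ω - empiricalFreq Z' v ω) ^ 2 ∂P
      ≤ 2 * Var[empiricalFreq Z v; P] + 2 * Var[empiricalFreq Z' v; P] :=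
        integral_sq_sub_le_of_integral_eq (memLp_empiricalFreq hZ v)
          (memLp_empiricalFreq hZ' v) hfg
    _ ≤ 2 * ((Fintype.card ι : ℝ)⁻¹ / 4) + 2 * ((Fintype.card ι : ℝ)⁻¹ / 4) := by
        gcongr
        exacts [variance_empiricalFreq_le hZ hindep v, variance_empiricalFreq_le hZ' hindep' v]
    _ = (Fintype.card ι : ℝ)⁻¹ := by ring

end EmpiricalFreq

theorem empirical_measure_average_policy_L2_bound_general
    {X U : Type*} [Fintype X] [Fintype U]
    [DecidableEq X] [DecidableEq U]
    [MeasurableSpace X] [MeasurableSingletonClass X]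
    [MeasurableSpace U] [MeasurableSingletonClass U]
    {Ω : Type*} [MeasurableSpace Ω] (P : Measure Ω) [IsProbabilityMeasure P]
    (N : ℕ)
    -- the fixed agent state distribution μ₀ ∈ 𝒫(X)
    (μ0 : ↥(stdSimplex ℝ X))
    -- the one-step policy profile (h¹, …, hᴺ) ∈ 𝓗ᴺ, where 𝓗 = {h : X → 𝒫(U)}
    (h : Fin N → X → ↥(stdSimplex ℝ U))
    -- the random states and actions (xⁱ, uⁱ) generating G1 from the profile (h¹, …, hᴺ)
    (Xr : Fin N → Ω → X) (Ur : Fin N → Ω → U)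
    -- the random states and actions (x̂ⁱ, ûⁱ) generating G2 from the averaged
    -- profile (ĥ, …, ĥ); the joint distribution of the two families is arbitrary
    (Xr' : Fin N → Ω → X) (Ur' : Fin N → Ω → U)
    (hmeas : ∀ i, Measurable (fun ω => (Xr i ω, Ur i ω)))
    (hmeas' : ∀ i, Measurable (fun ω => (Xr' i ω, Ur' i ω)))
    -- the pairs are independent across agents, within each of the two families
    (hindep : iIndepFun (fun i ω => (Xr i ω, Ur i ω)) P)
    (hindep' : iIndepFun (fun i ω => (Xr' i ω, Ur' i ω)) P)
    -- xⁱ ~ μ₀ and uⁱ | xⁱ ~ hⁱ(xⁱ)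
    (hlaw : ∀ i (x : X) (u : U),
      P {ω | Xr i ω = x ∧ Ur i ω = u} = ENNReal.ofReal (μ0.1 x * (h i x).1 u))
    -- x̂ⁱ ~ μ₀ and ûⁱ | x̂ⁱ ~ ĥ(x̂ⁱ), where ĥ(x)(u) = (1/N) ∑ⱼ hʲ(x)(u)
    (hlaw' : ∀ i (x : X) (u : U),
      P {ω | Xr' i ω = x ∧ Ur' i ω = u}
        = ENNReal.ofReal (μ0.1 x * ((N : ℝ)⁻¹ * ∑ j, (h j x).1 u))) :
    Real.sqrt (∫ ω, (∑ p : X × U,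
        |empMeasure N Xr Ur ω p - empMeasure N Xr' Ur' ω p|) ^ 2 ∂P)
      ≤ (Fintype.card X : ℝ) * (Fintype.card U : ℝ) / Real.sqrt N := by
  set Z : Fin N → Ω → X × U := fun i ω => (Xr i ω, Ur i ω)
  set Z' : Fin N → Ω → X × U := fun i ω => (Xr' i ω, Ur' i ω)
  have hpre : ∀ {A : Ω → X} {B : Ω → U} (x : X) (u : U),
      (fun ω => (A ω, B ω)) ⁻¹' {(x, u)} = {ω | A ω = x ∧ B ω = u} :=
    fun _ _ => Set.ext fun _ => Prod.mk_inj
  have hmean : ∀ p, ∑ i, P.real (Z i ⁻¹' {p}) = ∑ i, P.real (Z' i ⁻¹' {p}) := by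
    rintro ⟨x, u⟩
    have hμh : ∀ i, 0 ≤ μ0.1 x * (h i x).1 u := fun i => mul_nonneg (μ0.2.1 x) ((h i x).2.1 u)
    simp only [Z, Z', measureReal_def, hpre, hlaw, hlaw', ENNReal.toReal_ofReal (hμh _),
      ENNReal.toReal_ofReal (mul_nonneg (μ0.2.1 x) (mul_nonneg (inv_nonneg.2 (Nat.cast_nonneg N))
        (sum_nonneg fun j _ => (h j x).2.1 u)))]
    rw [← mul_sum, sum_const, card_univ, Fintype.card_fin, nsmul_eq_mul]
    obtain rfl | hN := eq_or_ne N 0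
    · simp
    · field_simp
  have hL2 := integral_sq_sum_abs_le
    (fun p => (memLp_empiricalFreq hmeas p).sub (memLp_empiricalFreq hmeas' p))
    (fun p => integral_sq_sub_empiricalFreq_le hmeas hmeas' (fun _ _ => hindep.indepFun)
      (fun _ _ => hindep'.indepFun) (hmean p))
  simp only [empMeasure_eq_empiricalFreq]
  calc _ ≤ Real.sqrt ((Fintype.card (X × U) : ℝ) ^ 2 * (Fintype.card (Fin N) : ℝ)⁻¹) :=
        Real.sqrt_le_sqrt hL2
    _ = _ := by
        rw [Fintype.card_prod, Fintype.card_fin, ← div_eq_mul_inv, Real.sqrt_div (sq_nonneg _),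
          Real.sqrt_sq (Nat.cast_nonneg _), Nat.cast_mul]

theorem empirical_measure_average_policy_L2_bound
    {X U : Type*} [Fintype X] [Fintype U] [Nonempty X] [Nonempty U]
    [DecidableEq X] [DecidableEq U]
    [MeasurableSpace X] [MeasurableSingletonClass X]
    [MeasurableSpace U] [MeasurableSingletonClass U]
    {Ω : Type*} [MeasurableSpace Ω] (P : Measure Ω) [IsProbabilityMeasure P]
    (N : ℕ) (hN : 1 ≤ N)
    -- the fixed agent state distribution μ₀ ∈ 𝒫(X)
    (μ0 : ↥(stdSimplex ℝ X))
    -- the one-step policy profile (h¹, …, hᴺ) ∈ 𝓗ᴺ, where 𝓗 = {h : X → 𝒫(U)}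
    (h : Fin N → X → ↥(stdSimplex ℝ U))
    -- the random states and actions (xⁱ, uⁱ) generating G1 from the profile (h¹, …, hᴺ)
    (Xr : Fin N → Ω → X) (Ur : Fin N → Ω → U)
    -- the random states and actions (x̂ⁱ, ûⁱ) generating G2 from the averaged
    -- profile (ĥ, …, ĥ); the joint distribution of the two families is arbitrary
    (Xr' : Fin N → Ω → X) (Ur' : Fin N → Ω → U)
    (hmeas : ∀ i, Measurable (fun ω => (Xr i ω, Ur i ω)))
    (hmeas' : ∀ i, Measurable (fun ω => (Xr' i ω, Ur' i ω)))
    -- the pairs are independent across agents, within each of the two families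
    (hindep : iIndepFun (fun i ω => (Xr i ω, Ur i ω)) P)
    (hindep' : iIndepFun (fun i ω => (Xr' i ω, Ur' i ω)) P)
    -- xⁱ ~ μ₀ and uⁱ | xⁱ ~ hⁱ(xⁱ)
    (hlaw : ∀ i (x : X) (u : U),
      P {ω | Xr i ω = x ∧ Ur i ω = u} = ENNReal.ofReal (μ0.1 x * (h i x).1 u))
    -- x̂ⁱ ~ μ₀ and ûⁱ | x̂ⁱ ~ ĥ(x̂ⁱ), where ĥ(x)(u) = (1/N) ∑ⱼ hʲ(x)(u)
    (hlaw' : ∀ i (x : X) (u : U),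
      P {ω | Xr' i ω = x ∧ Ur' i ω = u}
        = ENNReal.ofReal (μ0.1 x * ((N : ℝ)⁻¹ * ∑ j, (h j x).1 u))) :
    Real.sqrt (∫ ω, (∑ p : X × U,
        |empMeasure N Xr Ur ω p - empMeasure N Xr' Ur' ω p|) ^ 2 ∂P)
      ≤ (Fintype.card X : ℝ) * (Fintype.card U : ℝ) / Real.sqrt N :=
  empirical_measure_average_policy_L2_bound_general P N μ0 h Xr Ur Xr' Ur' hmeas hmeas' hindep
    hindep' hlaw hlaw'
end

section
/- Let G1 and G2 be the empirical state-action measures generated from a one-step policy profile (h^1,…,h^N) ∈ H^N and from its average profile (ĥ,…,ĥ) with ĥ(x)(u) = (1/N) ∑_{i=1}^N h^i(x)(u), respectively, defined on a common probability space with arbitrary joint distribution but the specified marginals. Then for every ε > 0, P(‖G1 − G2‖₁ ≥ ε) ≤ |X|²|U|²/(ε²N). -/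
/-!
For each state-action pair `p = (x, u)`, both `G1 p` and `G2 p` are averages of `N` independent
indicators, so each has variance at most `1 / (4N)`; and both have mean `μ₀ x * ĥ x u`. Whatever
the coupling, `E[(G1 p - G2 p)²] ≤ 2 Var (G1 p) + 2 Var (G2 p) ≤ 1 / N`. By Cauchy–Schwarz,
`‖G1 - G2‖₁² ≤ |X| |U| ∑ₚ (G1 p - G2 p)²`, and Markov's inequality for this square gives the bound.
-/

open MeasureTheory ProbabilityTheory Finset

namespace ProbabilityTheory

variable {Ω : Type*} {mΩ : MeasurableSpace Ω} {μ : Measure Ω}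

lemma variance_sub_le [IsFiniteMeasure μ] {X Y : Ω → ℝ} (hX : MemLp X 2 μ) (hY : MemLp Y 2 μ) :
    Var[X - Y; μ] ≤ 2 * Var[X; μ] + 2 * Var[Y; μ] := by
  have hadd := variance_nonneg (X + Y) μ
  rw [variance_add hX hY] at hadd
  rw [variance_sub hX hY]
  linarith

lemma integral_sub_sq_le_of_integral_eq [IsProbabilityMeasure μ] {X Y : Ω → ℝ}
    (hX : MemLp X 2 μ) (hY : MemLp Y 2 μ) (h : μ[X] = μ[Y]) :
    ∫ ω, (X ω - Y ω) ^ 2 ∂μ ≤ 2 * Var[X; μ] + 2 * Var[Y; μ] := by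
  have hmean : μ[X - Y] = 0 := by
    rw [integral_sub' (hX.integrable one_le_two) (hY.integrable one_le_two), h, sub_self]
  have := variance_eq_sub (hX.sub hY)
  rw [hmean] at this
  calc ∫ ω, (X ω - Y ω) ^ 2 ∂μ = Var[X - Y; μ] := by simpa using this.symm
    _ ≤ _ := variance_sub_le hX hY

lemma variance_average_le_of_mem_Icc [IsProbabilityMeasure μ] {ι : Type*} [Fintype ι]
    {Y : ι → Ω → ℝ} {a b : ℝ} (hY : ∀ i, AEMeasurable (Y i) μ)
    (hbd : ∀ i, ∀ᵐ ω ∂μ, Y i ω ∈ Set.Icc a b) (hind : Pairwise fun i j => Y i ⟂ᵢ[μ] Y j) :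
    Var[fun ω => (Fintype.card ι : ℝ)⁻¹ * ∑ i, Y i ω; μ] ≤ ((b - a) / 2) ^ 2 / Fintype.card ι := by
  have hL2 : ∀ i ∈ (univ : Finset ι), MemLp (Y i) 2 μ := fun i _ =>
    memLp_of_bounded (hbd i) (hY i).aestronglyMeasurable 2
  have hsum : Var[fun ω => ∑ i, Y i ω; μ] = ∑ i, Var[Y i; μ] := by
    rw [← Finset.sum_fn]
    exact IndepFun.variance_sum hL2 fun i _ j _ hij => hind hij
  rw [variance_const_mul, hsum]
  calc ((Fintype.card ι : ℝ)⁻¹) ^ 2 * ∑ i, Var[Y i; μ]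
      ≤ ((Fintype.card ι : ℝ)⁻¹) ^ 2 * ∑ _i : ι, ((b - a) / 2) ^ 2 := by
        gcongr with i
        exact variance_le_sq_of_bounded (hbd i) (hY i)
    _ = ((b - a) / 2) ^ 2 / Fintype.card ι := by
        rcases eq_or_ne (Fintype.card ι : ℝ) 0 with h0 | h0
        · simp [h0]
        · simp only [sum_const, card_univ, nsmul_eq_mul]
          field_simp

end ProbabilityTheory

namespace MeasureTheory

variable {α : Type*} {mα : MeasurableSpace α} {μ : Measure α}

lemma meas_ge_le_ofReal_integral_div {f : α → ℝ} (hf₀ : 0 ≤ᵐ[μ] f) (hf : Integrable f μ)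
    {ε : ℝ} (hε : 0 < ε) : μ {x | ε ≤ f x} ≤ ENNReal.ofReal ((∫ x, f x ∂μ) / ε) := by
  rw [← ENNReal.ofReal_toReal (hf.measure_ge_lt_top hε).ne]
  refine ENNReal.ofReal_le_ofReal ?_
  rw [le_div_iff₀ hε, mul_comm]
  exact mul_meas_ge_le_integral_of_nonneg hf₀ hf ε

lemma meas_sum_abs_ge_le_of_integral_sq_le {ι : Type*} [Fintype ι] {D : ι → α → ℝ}
    (hD : ∀ i, MemLp (D i) 2 μ) {σ : ℝ} (hσ : ∀ i, ∫ x, D i x ^ 2 ∂μ ≤ σ) {ε : ℝ} (hε : 0 < ε) :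
    μ {x | ε ≤ ∑ i, |D i x|} ≤ ENNReal.ofReal (Fintype.card ι ^ 2 * σ / ε ^ 2) := by
  set g : α → ℝ := fun x => Fintype.card ι * ∑ i, D i x ^ 2
  have hg : Integrable g μ := (integrable_finsetSum _ fun i _ => (hD i).integrable_sq).const_mul _
  have hsub : {x | ε ≤ ∑ i, |D i x|} ⊆ {x | ε ^ 2 ≤ g x} := fun x hx => by
    have hcs := sq_sum_le_card_mul_sum_sq (s := univ) (f := fun i => |D i x|)
    simp only [sq_abs, card_univ] at hcs
    exact (pow_le_pow_left₀ hε.le hx 2).trans hcs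
  have hint : ∫ x, g x ∂μ ≤ Fintype.card ι * (Fintype.card ι * σ) := by
    rw [integral_const_mul, integral_finsetSum _ fun i _ => (hD i).integrable_sq]
    gcongr
    calc ∑ i, ∫ x, D i x ^ 2 ∂μ ≤ ∑ _i : ι, σ := sum_le_sum fun i _ => hσ i
      _ = Fintype.card ι * σ := by simp
  calc μ {x | ε ≤ ∑ i, |D i x|} ≤ μ {x | ε ^ 2 ≤ g x} := measure_mono hsub
    _ ≤ ENNReal.ofReal ((∫ x, g x ∂μ) / ε ^ 2) :=
        meas_ge_le_ofReal_integral_div (ae_of_all _ fun x => by positivity) hg (by positivity)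
    _ ≤ _ := by
        gcongr
        linarith

end MeasureTheory

section EmpiricalMeasure

variable {X U Ω : Type*} [Fintype X] [Fintype U] [DecidableEq X] [DecidableEq U]
  [MeasurableSpace X] [MeasurableSingletonClass X] [MeasurableSpace U] [MeasurableSingletonClass U]
  {mΩ : MeasurableSpace Ω} {P : Measure Ω} {N : ℕ} {Xr : Fin N → Ω → X} {Ur : Fin N → Ω → U}

lemma memLp_empMeasure [IsFiniteMeasure P] (hmeas : ∀ i, Measurable fun ω => (Xr i ω, Ur i ω))
    (p : X × U) : MemLp (fun ω => empMeasure N Xr Ur ω p) 2 P := by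
  refine (memLp_finsetSum univ fun i _ => memLp_of_bounded (a := 0) (b := 1) ?_ ?_ 2).const_mul _
  · exact ae_of_all _ fun ω => by split_ifs <;> simp
  · exact ((measurable_of_countable fun q : X × U => if q = p then (1 : ℝ) else 0).comp
      (hmeas i)).aestronglyMeasurable

lemma integral_empMeasure_of_law [IsFiniteMeasure P]
    (hmeas : ∀ i, Measurable fun ω => (Xr i ω, Ur i ω)) {q : Fin N → X → U → ℝ}
    (hq : ∀ i x u, 0 ≤ q i x u)
    (hlaw : ∀ i x u, P {ω | Xr i ω = x ∧ Ur i ω = u} = ENNReal.ofReal (q i x u)) (p : X × U) :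
    ∫ ω, empMeasure N Xr Ur ω p ∂P = (N : ℝ)⁻¹ * ∑ i, q i p.1 p.2 := by
  have hset : ∀ i, MeasurableSet {ω | Xr i ω = p.1 ∧ Ur i ω = p.2} := fun i => by
    convert hmeas i (measurableSet_singleton p) using 1
    ext ω; simp [Prod.ext_iff]
  have hδ : ∀ i, (fun ω => if (Xr i ω, Ur i ω) = p then (1 : ℝ) else 0)
      = {ω | Xr i ω = p.1 ∧ Ur i ω = p.2}.indicator 1 := fun i => by
    ext ω; simp [Set.indicator_apply, Prod.ext_iff]
  unfold empMeasure
  rw [integral_const_mul,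
    integral_finsetSum _ fun i _ => hδ i ▸ (integrable_const 1).indicator (hset i)]
  simp_rw [hδ, integral_indicator_one (hset _), measureReal_def, hlaw,
    ENNReal.toReal_ofReal (hq _ _ _)]

lemma variance_empMeasure_le [IsProbabilityMeasure P]
    (hmeas : ∀ i, Measurable fun ω => (Xr i ω, Ur i ω))
    (hindep : iIndepFun (fun i ω => (Xr i ω, Ur i ω)) P) (p : X × U) :
    Var[fun ω => empMeasure N Xr Ur ω p; P] ≤ (4 * (N : ℝ))⁻¹ := by
  set δ : X × U → ℝ := fun q => if q = p then 1 else 0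
  have hδ : Measurable δ := measurable_of_countable δ
  have := variance_average_le_of_mem_Icc (μ := P) (a := 0) (b := 1)
    (Y := fun i ω => δ (Xr i ω, Ur i ω)) (fun i => (hδ.comp (hmeas i)).aemeasurable)
    (fun i => ae_of_all _ fun ω => by simp only [δ]; split_ifs <;> simp)
    (fun i j hij => (hindep.indepFun hij).comp hδ hδ)
  simp only [Fintype.card_fin] at this
  refine this.trans_eq ?_
  norm_num [div_eq_mul_inv, mul_comm]

lemma integral_sq_empMeasure_sub_le [IsProbabilityMeasure P] {Xr' : Fin N → Ω → X}
    {Ur' : Fin N → Ω → U} (hmeas : ∀ i, Measurable fun ω => (Xr i ω, Ur i ω))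
    (hmeas' : ∀ i, Measurable fun ω => (Xr' i ω, Ur' i ω))
    (hindep : iIndepFun (fun i ω => (Xr i ω, Ur i ω)) P)
    (hindep' : iIndepFun (fun i ω => (Xr' i ω, Ur' i ω)) P) {p : X × U}
    (hmean : ∫ ω, empMeasure N Xr Ur ω p ∂P = ∫ ω, empMeasure N Xr' Ur' ω p ∂P) :
    ∫ ω, (empMeasure N Xr Ur ω p - empMeasure N Xr' Ur' ω p) ^ 2 ∂P ≤ (N : ℝ)⁻¹ :=
  calc _ ≤ 2 * Var[fun ω => empMeasure N Xr Ur ω p; P]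
        + 2 * Var[fun ω => empMeasure N Xr' Ur' ω p; P] :=
        integral_sub_sq_le_of_integral_eq (memLp_empMeasure hmeas p)
          (memLp_empMeasure hmeas' p) hmean
    _ ≤ 2 * (4 * (N : ℝ))⁻¹ + 2 * (4 * (N : ℝ))⁻¹ := by
        gcongr
        exacts [variance_empMeasure_le hmeas hindep p, variance_empMeasure_le hmeas' hindep' p]
    _ = (N : ℝ)⁻¹ := by rw [mul_inv]; ring

end EmpiricalMeasure

theorem empirical_measure_average_policy_concentration_general
    {X U : Type*} [Fintype X] [Fintype U]
    [DecidableEq X] [DecidableEq U]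
    [MeasurableSpace X] [MeasurableSingletonClass X]
    [MeasurableSpace U] [MeasurableSingletonClass U]
    {Ω : Type*} [MeasurableSpace Ω] (P : Measure Ω) [IsProbabilityMeasure P]
    (N : ℕ)
    -- the fixed agent state distribution μ₀ ∈ 𝒫(X)
    (μ0 : ↥(stdSimplex ℝ X))
    -- the one-step policy profile (h¹, …, hᴺ) ∈ 𝓗ᴺ, where 𝓗 = {h : X → 𝒫(U)}
    (h : Fin N → X → ↥(stdSimplex ℝ U))
    -- the random states and actions (xⁱ, uⁱ) generating G1 from the profile (h¹, …, hᴺ)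
    (Xr : Fin N → Ω → X) (Ur : Fin N → Ω → U)
    -- the random states and actions (x̂ⁱ, ûⁱ) generating G2 from the averaged
    -- profile (ĥ, …, ĥ); the joint distribution of the two families is arbitrary
    (Xr' : Fin N → Ω → X) (Ur' : Fin N → Ω → U)
    (hmeas : ∀ i, Measurable (fun ω => (Xr i ω, Ur i ω)))
    (hmeas' : ∀ i, Measurable (fun ω => (Xr' i ω, Ur' i ω)))
    -- the pairs are independent across agents, within each of the two families
    (hindep : iIndepFun (fun i ω => (Xr i ω, Ur i ω)) P)
    (hindep' : iIndepFun (fun i ω => (Xr' i ω, Ur' i ω)) P)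
    -- xⁱ ~ μ₀ and uⁱ | xⁱ ~ hⁱ(xⁱ)
    (hlaw : ∀ i (x : X) (u : U),
      P {ω | Xr i ω = x ∧ Ur i ω = u} = ENNReal.ofReal (μ0.1 x * (h i x).1 u))
    -- x̂ⁱ ~ μ₀ and ûⁱ | x̂ⁱ ~ ĥ(x̂ⁱ), where ĥ(x)(u) = (1/N) ∑ⱼ hʲ(x)(u)
    (hlaw' : ∀ i (x : X) (u : U),
      P {ω | Xr' i ω = x ∧ Ur' i ω = u}
        = ENNReal.ofReal (μ0.1 x * ((N : ℝ)⁻¹ * ∑ j, (h j x).1 u))) :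
    ∀ ε : ℝ, 0 < ε →
      P {ω | ε ≤ ∑ p : X × U,
          |empMeasure N Xr Ur ω p - empMeasure N Xr' Ur' ω p|}
        ≤ ENNReal.ofReal
          ((Fintype.card X : ℝ) ^ 2 * (Fintype.card U : ℝ) ^ 2 / (ε ^ 2 * N)) := by
  intro ε hε
  have hmean : ∀ p : X × U,
      ∫ ω, empMeasure N Xr Ur ω p ∂P = ∫ ω, empMeasure N Xr' Ur' ω p ∂P := by
    rintro ⟨x, u⟩
    rw [integral_empMeasure_of_law hmeas (fun i x u => mul_nonneg (μ0.2.1 x) ((h i x).2.1 u)) hlaw,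
      integral_empMeasure_of_law hmeas' (fun i x u => mul_nonneg (μ0.2.1 x)
        (mul_nonneg (inv_nonneg.2 N.cast_nonneg) (sum_nonneg fun j _ => (h j x).2.1 u))) hlaw']
    rcases eq_or_ne (N : ℝ) 0 with hN | hN
    · simp [hN]
    · simp only [sum_const, card_univ, Fintype.card_fin, nsmul_eq_mul, ← mul_sum]
      field_simp
  refine (meas_sum_abs_ge_le_of_integral_sq_le
    (fun p => (memLp_empMeasure hmeas p).sub (memLp_empMeasure hmeas' p))
    (fun p => integral_sq_empMeasure_sub_le hmeas hmeas' hindep hindep' (hmean p)) hε).trans_eq ?_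
  rw [Fintype.card_prod]
  push_cast
  ring_nf

theorem empirical_measure_average_policy_concentration
    {X U : Type*} [Fintype X] [Fintype U] [Nonempty X] [Nonempty U]
    [DecidableEq X] [DecidableEq U]
    [MeasurableSpace X] [MeasurableSingletonClass X]
    [MeasurableSpace U] [MeasurableSingletonClass U]
    {Ω : Type*} [MeasurableSpace Ω] (P : Measure Ω) [IsProbabilityMeasure P]
    (N : ℕ) (hN : 1 ≤ N)
    -- the fixed agent state distribution μ₀ ∈ 𝒫(X)
    (μ0 : ↥(stdSimplex ℝ X))
    -- the one-step policy profile (h¹, …, hᴺ) ∈ 𝓗ᴺ, where 𝓗 = {h : X → 𝒫(U)}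
    (h : Fin N → X → ↥(stdSimplex ℝ U))
    -- the random states and actions (xⁱ, uⁱ) generating G1 from the profile (h¹, …, hᴺ)
    (Xr : Fin N → Ω → X) (Ur : Fin N → Ω → U)
    -- the random states and actions (x̂ⁱ, ûⁱ) generating G2 from the averaged
    -- profile (ĥ, …, ĥ); the joint distribution of the two families is arbitrary
    (Xr' : Fin N → Ω → X) (Ur' : Fin N → Ω → U)
    (hmeas : ∀ i, Measurable (fun ω => (Xr i ω, Ur i ω)))
    (hmeas' : ∀ i, Measurable (fun ω => (Xr' i ω, Ur' i ω)))
    -- the pairs are independent across agents, within each of the two families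
    (hindep : iIndepFun (fun i ω => (Xr i ω, Ur i ω)) P)
    (hindep' : iIndepFun (fun i ω => (Xr' i ω, Ur' i ω)) P)
    -- xⁱ ~ μ₀ and uⁱ | xⁱ ~ hⁱ(xⁱ)
    (hlaw : ∀ i (x : X) (u : U),
      P {ω | Xr i ω = x ∧ Ur i ω = u} = ENNReal.ofReal (μ0.1 x * (h i x).1 u))
    -- x̂ⁱ ~ μ₀ and ûⁱ | x̂ⁱ ~ ĥ(x̂ⁱ), where ĥ(x)(u) = (1/N) ∑ⱼ hʲ(x)(u)
    (hlaw' : ∀ i (x : X) (u : U),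
      P {ω | Xr' i ω = x ∧ Ur' i ω = u}
        = ENNReal.ofReal (μ0.1 x * ((N : ℝ)⁻¹ * ∑ j, (h j x).1 u))) :
    ∀ ε : ℝ, 0 < ε →
      P {ω | ε ≤ ∑ p : X × U,
          |empMeasure N Xr Ur ω p - empMeasure N Xr' Ur' ω p|}
        ≤ ENNReal.ofReal
          ((Fintype.card X : ℝ) ^ 2 * (Fintype.card U : ℝ) ^ 2 / (ε ^ 2 * N)) :=
  empirical_measure_average_policy_concentration_general P N μ0 h Xr Ur Xr' Ur' hmeas hmeas' hindep
    hindep' hlaw hlaw'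
end

section
/- Under the continuity assumption on r and P^0, the N-agent objective converges to the mean-field objective uniformly over all mean-field policies: lim_{N→∞} sup_{π∈Π} |J^N(π^N(π)) − J(π)| = 0. -/
open Finset Filter Topology

section MFC

variable {X U X0 : Type*} [Fintype X] [Fintype U] [Fintype X0]

/-- The state-action distribution `G(μ,h)(x,u) = h(x)(u)·μ(x)` induced by a state
distribution `μ` and a decision rule `h ∈ 𝓗 = {h : X → 𝒫(U)}`. -/
noncomputable def jointG (μ : ↥(stdSimplex ℝ X)) (h : X → ↥(stdSimplex ℝ U)) :
    ↥(stdSimplex ℝ (X × U)) :=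
  ⟨fun p => (h p.1).1 p.2 * μ.1 p.1,
   ⟨fun p => mul_nonneg ((h p.1).2.1 p.2) (μ.2.1 p.1), by
    calc ∑ p : X × U, (h p.1).1 p.2 * μ.1 p.1
        = ∑ x : X, ∑ u : U, (h x).1 u * μ.1 x := by rw [Fintype.sum_prod_type]
      _ = ∑ x : X, (∑ u : U, (h x).1 u) * μ.1 x := by
          simp [Finset.sum_mul]
      _ = 1 := by
          simp only [fun x : X => (h x).2.2, one_mul]
          exact μ.2.2⟩⟩

/-- The (deterministic) empirical state-action distribution of the `N+1` sampled
state-action pairs `s i ∈ X × U`. -/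
noncomputable def empDist [DecidableEq X] [DecidableEq U] (N : ℕ) (s : Fin (N + 1) → X × U) :
    ↥(stdSimplex ℝ (X × U)) :=
  ⟨fun p => (∑ i, if s i = p then (1 : ℝ) else 0) / (N + 1),
   ⟨fun p => div_nonneg (Finset.sum_nonneg fun i _ => by positivity) (by positivity), by
    rw [← Finset.sum_div, Finset.sum_comm]
    simp only [Finset.sum_ite_eq, Finset.mem_univ, if_true, Finset.sum_const,
      Finset.card_univ, Fintype.card_fin, nsmul_eq_mul, mul_one]
    rw [Nat.cast_add, Nat.cast_one, div_self (by positivity)]⟩⟩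

/-- The probability that the `N+1` agents, with states drawn i.i.d. from `μ0` and actions
drawn conditionally independently from the decision rules `d i`, sample exactly the
state-action pairs `s i`. -/
noncomputable def sampleWeight (N : ℕ) (μ0 : ↥(stdSimplex ℝ X))
    (d : Fin (N + 1) → X → ↥(stdSimplex ℝ U)) (s : Fin (N + 1) → X × U) : ℝ :=
  ∏ i, μ0.1 (s i).1 * (d i (s i).1).1 (s i).2

/-- The expectation `E[f(𝔾^N)]` of a function `f` of the random empirical state-action
distribution `𝔾^N ~ 𝒢^N(μ0, (d¹,…,d^{N+1}))`. -/
noncomputable def empExp [DecidableEq X] [DecidableEq U] (N : ℕ) (μ0 : ↥(stdSimplex ℝ X))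
    (d : Fin (N + 1) → X → ↥(stdSimplex ℝ U))
    (f : ↥(stdSimplex ℝ (X × U)) → ℝ) : ℝ :=
  ∑ s : Fin (N + 1) → X × U, sampleWeight N μ0 d s * f (empDist N s)

/-- The law of the environment state `x^{0,N}_t` of the `(N+1)`-agent system under the
policy tuple `πv`, with agent states resampled i.i.d. from `μ0` at every step. -/
noncomputable def envLawN [DecidableEq X] [DecidableEq U] (N : ℕ) (μ0 : ↥(stdSimplex ℝ X))
    (μ00 : ↥(stdSimplex ℝ X0))
    (P0 : X0 → ↥(stdSimplex ℝ (X × U)) → ↥(stdSimplex ℝ X0))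
    (πv : Fin (N + 1) → ℕ → X0 → X → ↥(stdSimplex ℝ U)) : ℕ → X0 → ℝ
  | 0 => fun y => μ00.1 y
  | t + 1 => fun y => ∑ x0 : X0, envLawN N μ0 μ00 P0 πv t x0 *
      empExp N μ0 (fun i => πv i t x0) (fun G => (P0 x0 G).1 y)

/-- The `(N+1)`-agent objective `J^N(π¹,…,π^{N+1}) = E[∑ₜ γᵗ r(x^{0,N}_t, 𝔾^N_t)]`. -/
noncomputable def JN [DecidableEq X] [DecidableEq U] (N : ℕ) (μ0 : ↥(stdSimplex ℝ X))
    (μ00 : ↥(stdSimplex ℝ X0))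
    (P0 : X0 → ↥(stdSimplex ℝ (X × U)) → ↥(stdSimplex ℝ X0))
    (r : X0 → ↥(stdSimplex ℝ (X × U)) → ℝ) (γ : ℝ)
    (πv : Fin (N + 1) → ℕ → X0 → X → ↥(stdSimplex ℝ U)) : ℝ :=
  ∑' t : ℕ, γ ^ t * ∑ x0 : X0, envLawN N μ0 μ00 P0 πv t x0 *
      empExp N μ0 (fun i => πv i t x0) (fun G => r x0 G)

/-- The law of the mean-field environment state `x^0_t` under the mean-field policy `π`. -/
noncomputable def envLawMF (μ0 : ↥(stdSimplex ℝ X)) (μ00 : ↥(stdSimplex ℝ X0))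
    (P0 : X0 → ↥(stdSimplex ℝ (X × U)) → ↥(stdSimplex ℝ X0))
    (π : ℕ → X0 → X → ↥(stdSimplex ℝ U)) : ℕ → X0 → ℝ
  | 0 => fun y => μ00.1 y
  | t + 1 => fun y => ∑ x0 : X0, envLawMF μ0 μ00 P0 π t x0 *
      (P0 x0 (jointG μ0 (π t x0))).1 y

/-- The mean-field objective `J(π) = E[∑ₜ γᵗ r(x^0_t, G(μ0, π_t(x^0_t)))]`. -/
noncomputable def JMF (μ0 : ↥(stdSimplex ℝ X)) (μ00 : ↥(stdSimplex ℝ X0))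
    (P0 : X0 → ↥(stdSimplex ℝ (X × U)) → ↥(stdSimplex ℝ X0))
    (r : X0 → ↥(stdSimplex ℝ (X × U)) → ℝ) (γ : ℝ)
    (π : ℕ → X0 → X → ↥(stdSimplex ℝ U)) : ℝ :=
  ∑' t : ℕ, γ ^ t * ∑ x0 : X0, envLawMF μ0 μ00 P0 π t x0 * r x0 (jointG μ0 (π t x0))

end MFC

/-!
Agent states are resampled i.i.d. at every step, so given the environment state the empirical
state-action distribution `𝔾^N` averages `N + 1` independent samples of `G(μ0, h)`. Its
variance is `O(1/N)` uniformly in `h`, hence `E f(𝔾^N) → f(G(μ0, h))` uniformly in `h` for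
every `f` that is uniformly continuous on the compact simplex. Applied to `P⁰`, this makes the
environment laws of both systems `ℓ¹`-close at each fixed time, by induction on time since a
Markov step does not increase `ℓ¹` distances; applied to `r`, it makes the expected rewards
close at each fixed time. As rewards are bounded, discounting reduces the objectives to finitely
many times.
-/

section WeightedSums

variable {ι : Type*} [Fintype ι] {w : ι → ℝ}

theorem abs_sum_mul_le_of_mem_stdSimplex (hw : w ∈ stdSimplex ℝ ι) {f : ι → ℝ} {C : ℝ}
    (hf : ∀ i, |f i| ≤ C) : |∑ i, w i * f i| ≤ C :=
  calc |∑ i, w i * f i| ≤ ∑ i, w i * |f i| := by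
        refine (abs_sum_le_sum_abs _ _).trans_eq (sum_congr rfl fun i _ => ?_)
        rw [abs_mul, abs_of_nonneg (hw.1 i)]
    _ ≤ ∑ i, w i * C := sum_le_sum fun i _ => mul_le_mul_of_nonneg_left (hf i) (hw.1 i)
    _ = C := by rw [← sum_mul, hw.2, one_mul]

theorem abs_sum_mul_sub_le_of_mem_stdSimplex (hw : w ∈ stdSimplex ℝ ι) (f : ι → ℝ) (c : ℝ) :
    |∑ i, w i * f i - c| ≤ ∑ i, w i * |f i - c| := by
  have hc : ∑ i, w i * f i - c = ∑ i, w i * (f i - c) := by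
    simp only [mul_sub, sum_sub_distrib, ← sum_mul, hw.2, one_mul]
  rw [hc]
  refine (abs_sum_le_sum_abs _ _).trans_eq (sum_congr rfl fun i _ => ?_)
  rw [abs_mul, abs_of_nonneg (hw.1 i)]

theorem abs_sum_mul_sub_sum_mul_le (p q a b : ι → ℝ) (hq : ∀ i, 0 ≤ q i) :
    |∑ i, p i * a i - ∑ i, q i * b i| ≤ ∑ i, |p i - q i| * |a i| + ∑ i, q i * |a i - b i| := by
  have hsplit : ∑ i, p i * a i - ∑ i, q i * b i
      = ∑ i, ((p i - q i) * a i + q i * (a i - b i)) := by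
    rw [← sum_sub_distrib]
    exact sum_congr rfl fun i _ => by ring
  rw [hsplit, ← sum_add_distrib]
  refine (abs_sum_le_sum_abs _ _).trans (sum_le_sum fun i _ => (abs_add_le _ _).trans_eq ?_)
  rw [abs_mul, abs_mul, abs_of_nonneg (hq i)]

theorem sum_mul_mem_stdSimplex {κ : Type*} [Fintype κ] {p : ι → ℝ} {K : ι → κ → ℝ}
    (hp : p ∈ stdSimplex ℝ ι) (hK : ∀ i, K i ∈ stdSimplex ℝ κ) :
    (fun k => ∑ i, p i * K i k) ∈ stdSimplex ℝ κ :=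
  ⟨fun k => sum_nonneg fun i _ => mul_nonneg (hp.1 i) ((hK i).1 k), by
    rw [sum_comm]
    simp only [← mul_sum, (hK _).2, mul_one, hp.2]⟩

/-- One step of a Markov chain is `1`-Lipschitz in `ℓ¹`, up to the distance between the kernels. -/
theorem sum_abs_sum_mul_sub_sum_mul_le {κ : Type*} [Fintype κ] {p q : ι → ℝ} {K L : ι → κ → ℝ}
    (hq : q ∈ stdSimplex ℝ ι) (hK : ∀ i, K i ∈ stdSimplex ℝ κ) {δ : ℝ}
    (hKL : ∀ i, ∑ k, |K i k - L i k| ≤ δ) :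
    ∑ k, |∑ i, p i * K i k - ∑ i, q i * L i k| ≤ ∑ i, |p i - q i| + δ :=
  calc ∑ k, |∑ i, p i * K i k - ∑ i, q i * L i k|
      ≤ ∑ k, (∑ i, |p i - q i| * |K i k| + ∑ i, q i * |K i k - L i k|) :=
        sum_le_sum fun k _ => abs_sum_mul_sub_sum_mul_le _ _ _ _ hq.1
    _ = ∑ i, |p i - q i| * ∑ k, K i k + ∑ i, q i * ∑ k, |K i k - L i k| := by
        simp only [sum_add_distrib, mul_sum, abs_of_nonneg ((hK _).1 _)]
        rw [sum_comm, sum_comm (γ := κ)]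
    _ ≤ ∑ i, |p i - q i| + ∑ i, q i * δ := by
        simp only [(hK _).2, mul_one]
        exact add_le_add_right (sum_le_sum fun i _ => mul_le_mul_of_nonneg_left (hKL i) (hq.1 i)) _
    _ = ∑ i, |p i - q i| + δ := by rw [← sum_mul, hq.2, one_mul]

end WeightedSums

section ProductWeights

variable {ι A : Type*} [Fintype ι] [DecidableEq ι] [Fintype A]

theorem prod_mem_stdSimplex {w : ι → A → ℝ} (hw : ∀ i, w i ∈ stdSimplex ℝ A) :
    (fun s : ι → A => ∏ i, w i (s i)) ∈ stdSimplex ℝ (ι → A) :=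
  ⟨fun s => prod_nonneg fun i _ => (hw i).1 (s i), by
    simp only [← Fintype.prod_sum, (hw _).2, prod_const_one]⟩

variable {w : A → ℝ}

theorem sum_prod_mul_apply (hw : ∑ a, w a = 1) (f : A → ℝ) (i : ι) :
    ∑ s : ι → A, (∏ k, w (s k)) * f (s i) = ∑ a, w a * f a := by
  have hprod : ∀ s : ι → A, (∏ k, w (s k)) * f (s i)
      = ∏ k, w (s k) * (if k = i then f (s k) else 1) := fun s => by
    rw [prod_mul_distrib, Fintype.prod_ite_eq']
  calc ∑ s : ι → A, (∏ k, w (s k)) * f (s i)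
      = ∑ s : ι → A, ∏ k, (fun k a => w a * if k = i then f a else 1) k (s k) :=
        sum_congr rfl fun s _ => hprod s
    _ = ∏ k, ∑ a, w a * (if k = i then f a else 1) := by rw [Fintype.prod_sum]
    _ = ∑ a, w a * f a :=
        (Fintype.prod_eq_single i fun k hk => by simp [hk, hw]).trans (by simp)

theorem sum_prod_mul_apply_mul_apply_eq_zero {Z : A → ℝ} (hZ : ∑ a, w a * Z a = 0) {i j : ι}
    (hij : i ≠ j) : ∑ s : ι → A, (∏ k, w (s k)) * (Z (s i) * Z (s j)) = 0 := by
  have hprod : ∀ s : ι → A, (∏ k, w (s k)) * (Z (s i) * Z (s j))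
      = ∏ k, w (s k) * (if k = i then Z (s k) else 1) * (if k = j then Z (s k) else 1) :=
    fun s => by rw [prod_mul_distrib, prod_mul_distrib, Fintype.prod_ite_eq',
      Fintype.prod_ite_eq', mul_assoc]
  calc ∑ s : ι → A, (∏ k, w (s k)) * (Z (s i) * Z (s j))
      = ∑ s : ι → A, ∏ k, (fun k a => w a * (if k = i then Z a else 1) *
          (if k = j then Z a else 1)) k (s k) := sum_congr rfl fun s _ => hprod s
    _ = ∏ k, ∑ a, w a * (if k = i then Z a else 1) * (if k = j then Z a else 1) := by
        rw [Fintype.prod_sum]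
    _ = 0 := prod_eq_zero (mem_univ i) (by simpa [hij] using hZ)

/-- The variance of a sum of independent centred variables is the sum of their variances. -/
theorem sum_prod_mul_sum_sq (hw : ∑ a, w a = 1) {Z : A → ℝ} (hZ : ∑ a, w a * Z a = 0) :
    ∑ s : ι → A, (∏ k, w (s k)) * (∑ i, Z (s i)) ^ 2 = Fintype.card ι * ∑ a, w a * Z a ^ 2 := by
  calc ∑ s : ι → A, (∏ k, w (s k)) * (∑ i, Z (s i)) ^ 2
      = ∑ i, ∑ j, ∑ s : ι → A, (∏ k, w (s k)) * (Z (s i) * Z (s j)) := by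
        have hexpand : ∀ s : ι → A, (∏ k, w (s k)) * (∑ i, Z (s i)) ^ 2
            = ∑ i, ∑ j, (∏ k, w (s k)) * (Z (s i) * Z (s j)) := fun s => by
          rw [sq, sum_mul_sum, mul_sum]
          simp only [mul_sum]
        rw [sum_congr rfl fun s _ => hexpand s, sum_comm]
        exact sum_congr rfl fun i _ => sum_comm
    _ = ∑ i, ∑ s : ι → A, (∏ k, w (s k)) * Z (s i) ^ 2 := by
        refine sum_congr rfl fun i _ => ?_
        rw [sum_eq_single i (fun j _ hji => sum_prod_mul_apply_mul_apply_eq_zero hZ hji.symm)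
          (by simp)]
        simp only [sq]
    _ = Fintype.card ι * ∑ a, w a * Z a ^ 2 := by
        simp only [sum_prod_mul_apply hw (fun a => Z a ^ 2), sum_const, card_univ, nsmul_eq_mul]

end ProductWeights

section Analysis

theorem exists_forall_abs_le_of_continuous {κ α : Type*} [Finite κ] [TopologicalSpace α]
    [CompactSpace α] {f : κ → α → ℝ} (hf : ∀ k, Continuous (f k)) :
    ∃ C, 0 < C ∧ ∀ k x, |f k x| ≤ C := by
  choose C hC using fun k => isCompact_univ.exists_bound_of_continuousOn (hf k).continuousOn
  obtain ⟨M, hM⟩ := Finite.exists_le C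
  exact ⟨max M 1, lt_max_of_lt_right one_pos,
    fun k x => ((hC k x trivial).trans (hM k)).trans (le_max_left _ _)⟩

/-- Uniform continuity in a form that can be integrated against a second-moment bound. -/
theorem exists_abs_sub_le_add_mul_sum_sq {ι : Type*} [Fintype ι] {S : Set (ι → ℝ)}
    [CompactSpace S] {f : S → ℝ} (hf : Continuous f) {ε : ℝ} (hε : 0 < ε) :
    ∃ B, 0 ≤ B ∧ ∀ x y : S, |f x - f y| ≤ ε + B * ∑ i, ((x : ι → ℝ) i - (y : ι → ℝ) i) ^ 2 := by
  obtain ⟨C, hC0, hC⟩ := exists_forall_abs_le_of_continuous (κ := Unit) fun _ => hf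
  obtain ⟨δ, hδ, hfδ⟩ :=
    Metric.uniformContinuous_iff.1 (CompactSpace.uniformContinuous_of_continuous hf) ε hε
  refine ⟨2 * C / δ ^ 2, by positivity, fun x y => ?_⟩
  have hD : 0 ≤ ∑ i, ((x : ι → ℝ) i - (y : ι → ℝ) i) ^ 2 := by positivity
  have hB : 0 ≤ 2 * C / δ ^ 2 := by positivity
  by_cases hxy : dist x y < δ
  · have hclose : |f x - f y| < ε := hfδ hxy
    nlinarith [mul_nonneg hB hD]
  · rw [Subtype.dist_eq, dist_pi_lt_iff hδ] at hxy
    push Not at hxy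
    obtain ⟨i, hi⟩ := hxy
    rw [Real.dist_eq] at hi
    have hfar : δ ^ 2 ≤ ∑ i, ((x : ι → ℝ) i - (y : ι → ℝ) i) ^ 2 := by
      refine (sq_abs ((x : ι → ℝ) i - (y : ι → ℝ) i) ▸ pow_le_pow_left₀ hδ.le hi 2).trans ?_
      exact single_le_sum (f := fun i => ((x : ι → ℝ) i - (y : ι → ℝ) i) ^ 2)
        (fun i _ => sq_nonneg _) (mem_univ i)
    calc |f x - f y| ≤ 2 * C := by linarith [abs_sub (f x) (f y), hC () x, hC () y]
      _ = 2 * C / δ ^ 2 * δ ^ 2 := by field_simp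
      _ ≤ ε + 2 * C / δ ^ 2 * ∑ i, ((x : ι → ℝ) i - (y : ι → ℝ) i) ^ 2 := by
          nlinarith [mul_le_mul_of_nonneg_left hfar hB]

theorem eventually_forall_sum_abs_le {α ι κ : Type*} [Fintype κ] {l : Filter α}
    {g : α → ι → κ → ℝ} (hg : ∀ k, ∀ ε > 0, ∀ᶠ n in l, ∀ i, |g n i k| ≤ ε) :
    ∀ ε > 0, ∀ᶠ n in l, ∀ i, ∑ k, |g n i k| ≤ ε := by
  intro ε hε
  have hη : 0 < ε / (Fintype.card κ + 1) := by positivity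
  filter_upwards [eventually_all.2 fun k => hg k _ hη] with n hn i
  calc ∑ k, |g n i k| ≤ ∑ _k : κ, ε / (Fintype.card κ + 1) := sum_le_sum fun k _ => hn k i
    _ ≤ ε := by
        rw [sum_const, card_univ, nsmul_eq_mul, mul_div_assoc', div_le_iff₀ (by positivity)]
        nlinarith

theorem abs_tsum_geometric_mul_sub_le {γ C η : ℝ} (hγ0 : 0 ≤ γ) (hγ1 : γ < 1) {a b : ℕ → ℝ}
    (ha : ∀ t, |a t| ≤ C) (hb : ∀ t, |b t| ≤ C) {T : ℕ} (hab : ∀ t < T, |a t - b t| ≤ η) :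
    |∑' t, γ ^ t * a t - ∑' t, γ ^ t * b t| ≤ T * η + 2 * C * γ ^ T / (1 - γ) := by
  have hγt : ∀ t, |γ ^ t| = γ ^ t := fun t => abs_of_nonneg (pow_nonneg hγ0 t)
  have hsummable : ∀ {c : ℕ → ℝ}, (∀ t, |c t| ≤ C) → Summable fun t => γ ^ t * c t :=
    fun hc => ((summable_geometric_of_lt_one hγ0 hγ1).mul_left C).of_norm_bounded fun t => by
      rw [Real.norm_eq_abs, abs_mul, hγt, mul_comm C]
      exact mul_le_mul_of_nonneg_left (hc t) (pow_nonneg hγ0 t)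
  have hdiff : ∀ t, |a t - b t| ≤ 2 * C := fun t => by
    linarith [abs_sub (a t) (b t), ha t, hb t]
  rw [← (hsummable ha).tsum_sub (hsummable hb),
    ← ((hsummable ha).sub (hsummable hb)).sum_add_tsum_nat_add T]
  simp only [← mul_sub]
  refine (abs_add_le _ _).trans (add_le_add ?_ ?_)
  · refine (abs_sum_le_sum_abs _ _).trans ?_
    calc ∑ t ∈ range T, |γ ^ t * (a t - b t)| ≤ ∑ _t ∈ range T, η := by
          refine sum_le_sum fun t ht => ?_
          rw [abs_mul, hγt]
          exact (mul_le_of_le_one_left (abs_nonneg _) (pow_le_one₀ hγ0 hγ1.le)).trans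
            (hab t (mem_range.1 ht))
      _ = T * η := by rw [sum_const, card_range, nsmul_eq_mul]
  · rw [← Real.norm_eq_abs]
    refine tsum_of_norm_bounded ((hasSum_geometric_of_lt_one hγ0 hγ1).mul_left (2 * C * γ ^ T))
      fun t => ?_
    rw [Real.norm_eq_abs, abs_mul, hγt, pow_add]
    have := mul_le_mul_of_nonneg_left (hdiff (t + T)) (by positivity : 0 ≤ γ ^ t * γ ^ T)
    linarith

theorem eventually_forall_abs_tsum_geometric_mul_sub_le {α ι : Type*} {l : Filter α} {γ C : ℝ}
    (hγ0 : 0 ≤ γ) (hγ1 : γ < 1) {a : α → ι → ℕ → ℝ} {b : ι → ℕ → ℝ}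
    (ha : ∀ n i t, |a n i t| ≤ C) (hb : ∀ i t, |b i t| ≤ C)
    (hab : ∀ t, ∀ ε > 0, ∀ᶠ n in l, ∀ i, |a n i t - b i t| ≤ ε) :
    ∀ ε > 0, ∀ᶠ n in l, ∀ i, |∑' t, γ ^ t * a n i t - ∑' t, γ ^ t * b i t| ≤ ε := by
  intro ε hε
  obtain ⟨T, hT⟩ : ∃ T : ℕ, 2 * C * γ ^ T / (1 - γ) ≤ ε / 2 := by
    have htail : Tendsto (fun T : ℕ => 2 * C * γ ^ T / (1 - γ)) atTop (𝓝 0) := by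
      simpa using ((tendsto_pow_atTop_nhds_zero_of_lt_one hγ0 hγ1).const_mul (2 * C)).div_const
        (1 - γ)
    exact (htail.eventually_le_const (half_pos hε)).exists
  have hη : 0 < ε / (2 * (T + 1)) := by positivity
  filter_upwards [(eventually_all_finset (range T)).2 fun t _ => hab t _ hη] with n hn i
  calc _ ≤ T * (ε / (2 * (T + 1))) + 2 * C * γ ^ T / (1 - γ) :=
        abs_tsum_geometric_mul_sub_le hγ0 hγ1 (ha n i) (hb i) fun t ht => hn t (mem_range.2 ht) i
    _ ≤ ε / 2 + ε / 2 := by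
        gcongr
        rw [mul_div_assoc', div_le_div_iff₀ (by positivity) (by positivity)]
        nlinarith
    _ = ε := add_halves ε

theorem tendsto_iSup_abs_nhds_zero {α ι : Type*} {l : Filter α} {a : α → ι → ℝ}
    (h : ∀ ε > 0, ∀ᶠ n in l, ∀ i, |a n i| ≤ ε) : Tendsto (fun n => ⨆ i, |a n i|) l (𝓝 0) :=
  Metric.tendsto_nhds.2 fun ε hε => by
    filter_upwards [h (ε / 2) (half_pos hε)] with n hn
    rw [Real.dist_eq, sub_zero, abs_of_nonneg (Real.iSup_nonneg fun i => abs_nonneg _)]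
    exact (Real.iSup_le hn (half_pos hε).le).trans_lt (half_lt_self hε)

end Analysis

section EmpiricalDistribution

variable {X U : Type*} [Fintype X] [Fintype U]

theorem jointG_apply (μ : ↥(stdSimplex ℝ X)) (h : X → ↥(stdSimplex ℝ U)) (p : X × U) :
    (jointG μ h).1 p = μ.1 p.1 * (h p.1).1 p.2 :=
  mul_comm _ _

theorem sampleWeight_eq_prod_jointG (N : ℕ) (μ0 : ↥(stdSimplex ℝ X))
    (d : Fin (N + 1) → X → ↥(stdSimplex ℝ U)) (s : Fin (N + 1) → X × U) :
    sampleWeight N μ0 d s = ∏ i, (jointG μ0 (d i)).1 (s i) := by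
  simp only [sampleWeight, jointG_apply]

theorem sampleWeight_mem_stdSimplex (N : ℕ) (μ0 : ↥(stdSimplex ℝ X))
    (d : Fin (N + 1) → X → ↥(stdSimplex ℝ U)) :
    sampleWeight N μ0 d ∈ stdSimplex ℝ (Fin (N + 1) → X × U) := by
  rw [funext (sampleWeight_eq_prod_jointG N μ0 d)]
  exact prod_mem_stdSimplex fun i => (jointG μ0 (d i)).2

variable [DecidableEq X] [DecidableEq U]

theorem abs_empExp_le (N : ℕ) (μ0 : ↥(stdSimplex ℝ X)) (d : Fin (N + 1) → X → ↥(stdSimplex ℝ U))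
    {f : ↥(stdSimplex ℝ (X × U)) → ℝ} {C : ℝ} (hf : ∀ G, |f G| ≤ C) : |empExp N μ0 d f| ≤ C :=
  abs_sum_mul_le_of_mem_stdSimplex (sampleWeight_mem_stdSimplex N μ0 d) fun _ => hf _

theorem empExp_mem_stdSimplex {κ : Type*} [Fintype κ] (N : ℕ) (μ0 : ↥(stdSimplex ℝ X))
    (d : Fin (N + 1) → X → ↥(stdSimplex ℝ U)) (F : ↥(stdSimplex ℝ (X × U)) → ↥(stdSimplex ℝ κ)) :
    (fun k => empExp N μ0 d fun G => (F G).1 k) ∈ stdSimplex ℝ κ :=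
  sum_mul_mem_stdSimplex (sampleWeight_mem_stdSimplex N μ0 d) fun s => (F (empDist N s)).2

theorem sum_sampleWeight_mul_sq_empDist_sub_le (N : ℕ) (μ0 : ↥(stdSimplex ℝ X))
    (h : X → ↥(stdSimplex ℝ U)) (p : X × U) :
    ∑ s, sampleWeight N μ0 (fun _ => h) s * ((empDist N s).1 p - (jointG μ0 h).1 p) ^ 2
      ≤ 1 / (N + 1) := by
  set ν := jointG μ0 h
  set Z : X × U → ℝ := fun a => (if a = p then 1 else 0) - ν.1 p
  have hν := mem_Icc_of_mem_stdSimplex ν.2 p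
  have hZ : ∑ a, ν.1 a * Z a = 0 := by
    simp [Z, mul_sub, sum_sub_distrib, ← sum_mul, ν.2.2]
  have hZ2 : ∑ a, ν.1 a * Z a ^ 2 ≤ 1 := by
    refine (le_abs_self _).trans (abs_sum_mul_le_of_mem_stdSimplex ν.2 fun a => ?_)
    rw [abs_of_nonneg (sq_nonneg _)]
    by_cases hap : a = p <;> simp only [Z, hap, if_true, if_false] <;> nlinarith [hν.1, hν.2]
  have hdev : ∀ s : Fin (N + 1) → X × U, (empDist N s).1 p - ν.1 p = (∑ i, Z (s i)) / (N + 1) := by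
    intro s
    simp only [empDist, Z, sum_sub_distrib, sum_const, card_univ, Fintype.card_fin, nsmul_eq_mul]
    field_simp
    push_cast
    ring
  calc ∑ s, sampleWeight N μ0 (fun _ => h) s * ((empDist N s).1 p - ν.1 p) ^ 2
      = (∑ s : Fin (N + 1) → X × U, (∏ i, ν.1 (s i)) * (∑ i, Z (s i)) ^ 2) / (N + 1) ^ 2 := by
        rw [sum_div]
        refine sum_congr rfl fun s _ => ?_
        rw [hdev, sampleWeight_eq_prod_jointG, div_pow, mul_div_assoc]
    _ = (N + 1) * (∑ a, ν.1 a * Z a ^ 2) / (N + 1) ^ 2 := by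
        rw [sum_prod_mul_sum_sq ν.2.2 hZ, Fintype.card_fin]
        push_cast
        ring
    _ ≤ (N + 1) * 1 / (N + 1) ^ 2 := by gcongr
    _ = 1 / (N + 1) := by field_simp

theorem eventually_forall_abs_empExp_sub_le (μ0 : ↥(stdSimplex ℝ X))
    {f : ↥(stdSimplex ℝ (X × U)) → ℝ} (hf : Continuous f) :
    ∀ ε > 0, ∀ᶠ N in atTop, ∀ h, |empExp N μ0 (fun _ => h) f - f (jointG μ0 h)| ≤ ε := by
  intro ε hε
  obtain ⟨B, hB, hfB⟩ := exists_abs_sub_le_add_mul_sum_sq hf (half_pos hε)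
  set K : ℝ := (Fintype.card (X × U) : ℝ)
  have hbound : ∀ (N : ℕ) h,
      |empExp N μ0 (fun _ => h) f - f (jointG μ0 h)| ≤ ε / 2 + B * K * (1 / (N + 1)) := by
    intro N h
    set W := sampleWeight N μ0 (fun _ => h)
    have hW : W ∈ stdSimplex ℝ _ := sampleWeight_mem_stdSimplex N μ0 _
    set D := fun s p => ((empDist N s).1 p - (jointG μ0 h).1 p) ^ 2
    calc |empExp N μ0 (fun _ => h) f - f (jointG μ0 h)|
        ≤ ∑ s, W s * |f (empDist N s) - f (jointG μ0 h)| :=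
          abs_sum_mul_sub_le_of_mem_stdSimplex hW _ _
      _ ≤ ∑ s, W s * (ε / 2 + B * ∑ p, D s p) :=
          sum_le_sum fun s _ => mul_le_mul_of_nonneg_left (hfB _ _) (hW.1 s)
      _ = ε / 2 + B * ∑ p, ∑ s, W s * D s p := by
          simp only [mul_add, sum_add_distrib, ← sum_mul, hW.2, one_mul, mul_sum]
          rw [sum_comm]
          simp only [mul_left_comm]
      _ ≤ ε / 2 + B * ∑ _p : X × U, 1 / ((N : ℝ) + 1) := by
          gcongr with p
          exact sum_sampleWeight_mul_sq_empDist_sub_le N μ0 h p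
      _ = ε / 2 + B * K * (1 / (N + 1)) := by
          rw [sum_const, card_univ, nsmul_eq_mul, mul_assoc]
  have hlim : Tendsto (fun N : ℕ => ε / 2 + B * K * (1 / ((N : ℝ) + 1))) atTop
      (𝓝 (ε / 2 + B * K * 0)) :=
    tendsto_const_nhds.add (tendsto_one_div_add_atTop_nhds_zero_nat.const_mul _)
  filter_upwards [hlim.eventually_le_const (u := ε) (by linarith)] with N hN h
  exact (hbound N h).trans hN

theorem eventually_forall_sum_abs_empExp_sub_le {κ : Type*} [Fintype κ] (μ0 : ↥(stdSimplex ℝ X))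
    {F : ↥(stdSimplex ℝ (X × U)) → ↥(stdSimplex ℝ κ)} (hF : Continuous F) :
    ∀ ε > 0, ∀ᶠ N in atTop, ∀ h,
      ∑ k, |empExp N μ0 (fun _ => h) (fun G => (F G).1 k) - (F (jointG μ0 h)).1 k| ≤ ε :=
  eventually_forall_sum_abs_le (g := fun N h k =>
      empExp N μ0 (fun _ => h) (fun G => (F G).1 k) - (F (jointG μ0 h)).1 k)
    fun k => eventually_forall_abs_empExp_sub_le μ0
      ((continuous_apply k).comp (continuous_subtype_val.comp hF))

end EmpiricalDistribution

section EnvironmentLaw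

variable {X U X0 : Type*} [Fintype X] [Fintype U] [Fintype X0]
  (μ0 : ↥(stdSimplex ℝ X)) (μ00 : ↥(stdSimplex ℝ X0))
  (P0 : X0 → ↥(stdSimplex ℝ (X × U)) → ↥(stdSimplex ℝ X0))

theorem envLawMF_mem_stdSimplex (π : ℕ → X0 → X → ↥(stdSimplex ℝ U)) (t : ℕ) :
    envLawMF μ0 μ00 P0 π t ∈ stdSimplex ℝ X0 := by
  induction t with
  | zero => exact μ00.2
  | succ t ih => exact sum_mul_mem_stdSimplex ih fun x0 => (P0 x0 _).2

variable [DecidableEq X] [DecidableEq U]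

theorem envLawN_mem_stdSimplex (N : ℕ) (πv : Fin (N + 1) → ℕ → X0 → X → ↥(stdSimplex ℝ U))
    (t : ℕ) : envLawN N μ0 μ00 P0 πv t ∈ stdSimplex ℝ X0 := by
  induction t with
  | zero => exact μ00.2
  | succ t ih => exact sum_mul_mem_stdSimplex ih fun x0 => empExp_mem_stdSimplex _ _ _ (P0 x0)

theorem eventually_forall_sum_abs_envLawN_sub_envLawMF_le (hP0 : ∀ x0, Continuous (P0 x0))
    (t : ℕ) : ∀ ε > 0, ∀ᶠ N in atTop, ∀ π : ℕ → X0 → X → ↥(stdSimplex ℝ U),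
      ∑ x0, |envLawN N μ0 μ00 P0 (fun _ => π) t x0 - envLawMF μ0 μ00 P0 π t x0| ≤ ε := by
  induction t with
  | zero => exact fun ε hε => Eventually.of_forall fun N π => by simp [envLawN, envLawMF, hε.le]
  | succ t ih =>
    intro ε hε
    have hkernel := fun x0 => eventually_forall_sum_abs_empExp_sub_le μ0 (hP0 x0) _ (half_pos hε)
    filter_upwards [ih _ (half_pos hε), eventually_all.2 hkernel] with N hN hK π
    calc _ ≤ ∑ x0, |envLawN N μ0 μ00 P0 (fun _ => π) t x0 - envLawMF μ0 μ00 P0 π t x0| + ε / 2 :=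
          sum_abs_sum_mul_sub_sum_mul_le (envLawMF_mem_stdSimplex μ0 μ00 P0 π t)
            (fun x0 => empExp_mem_stdSimplex _ _ _ (P0 x0)) fun x0 => hK x0 (π t x0)
      _ ≤ ε := by linarith [hN π]

theorem eventually_forall_abs_expected_reward_sub_le (r : X0 → ↥(stdSimplex ℝ (X × U)) → ℝ)
    (hr : ∀ x0, Continuous (r x0)) (hP0 : ∀ x0, Continuous (P0 x0)) (t : ℕ) :
    ∀ ε > 0, ∀ᶠ N in atTop, ∀ π : ℕ → X0 → X → ↥(stdSimplex ℝ U),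
      |∑ x0, envLawN N μ0 μ00 P0 (fun _ => π) t x0 * empExp N μ0 (fun _ => π t x0) (r x0) -
        ∑ x0, envLawMF μ0 μ00 P0 π t x0 * r x0 (jointG μ0 (π t x0))| ≤ ε := by
  intro ε hε
  obtain ⟨C, hC, hrC⟩ := exists_forall_abs_le_of_continuous hr
  filter_upwards [eventually_forall_sum_abs_envLawN_sub_envLawMF_le μ0 μ00 P0 hP0 t _
      (by positivity : 0 < ε / (2 * C)),
    eventually_all.2 fun x0 => eventually_forall_abs_empExp_sub_le μ0 (hr x0) _ (half_pos hε)]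
    with N hlaw hrew π
  have hq := envLawMF_mem_stdSimplex μ0 μ00 P0 π t
  calc _ ≤ ∑ x0, |envLawN N μ0 μ00 P0 (fun _ => π) t x0 - envLawMF μ0 μ00 P0 π t x0| *
          |empExp N μ0 (fun _ => π t x0) (r x0)| +
        ∑ x0, envLawMF μ0 μ00 P0 π t x0 *
          |empExp N μ0 (fun _ => π t x0) (r x0) - r x0 (jointG μ0 (π t x0))| :=
        abs_sum_mul_sub_sum_mul_le _ _ _ _ hq.1
    _ ≤ (∑ x0, |envLawN N μ0 μ00 P0 (fun _ => π) t x0 - envLawMF μ0 μ00 P0 π t x0|) * C +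
        (∑ x0, envLawMF μ0 μ00 P0 π t x0) * (ε / 2) := by
        simp only [sum_mul]
        gcongr with x0
        · exact abs_empExp_le _ _ _ (hrC x0)
        · exact hq.1 x0
        · exact hrew x0 (π t x0)
    _ ≤ ε / (2 * C) * C + 1 * (ε / 2) := by
        rw [hq.2]
        gcongr
        exact hlaw π
    _ = ε := by field_simp; ring

end EnvironmentLaw

theorem N_agent_objective_tendsto_mean_field_general
    {X U X0 : Type*} [Fintype X] [Fintype U] [Fintype X0]
    [DecidableEq X] [DecidableEq U]
    (μ0 : ↥(stdSimplex ℝ X)) (μ00 : ↥(stdSimplex ℝ X0))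
    (P0 : X0 → ↥(stdSimplex ℝ (X × U)) → ↥(stdSimplex ℝ X0))
    (r : X0 → ↥(stdSimplex ℝ (X × U)) → ℝ)
    (γ : ℝ) (hγ : γ ∈ Set.Ioo (0 : ℝ) 1)
    -- Assumption 1: continuity of r and P⁰ in the state-action distribution
    (hr : ∀ x0, Continuous (r x0)) (hP0 : ∀ x0, Continuous (P0 x0)) :
    Tendsto (fun N : ℕ =>
        ⨆ π : ℕ → X0 → X → ↥(stdSimplex ℝ U),
          |JN N μ0 μ00 P0 r γ (fun _ => π) - JMF μ0 μ00 P0 r γ π|)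
      atTop (𝓝 0) := by
  obtain ⟨C, -, hrC⟩ := exists_forall_abs_le_of_continuous hr
  exact tendsto_iSup_abs_nhds_zero <|
    eventually_forall_abs_tsum_geometric_mul_sub_le hγ.1.le hγ.2
      (fun N π t => abs_sum_mul_le_of_mem_stdSimplex (envLawN_mem_stdSimplex μ0 μ00 P0 N _ t)
        fun x0 => abs_empExp_le _ _ _ (hrC x0))
      (fun π t => abs_sum_mul_le_of_mem_stdSimplex (envLawMF_mem_stdSimplex μ0 μ00 P0 π t)
        fun x0 => hrC x0 _)
      (eventually_forall_abs_expected_reward_sub_le μ0 μ00 P0 r hr hP0)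

/-- Under the continuity assumption on `r` and `P⁰`, the `N`-agent objective
converges to the mean-field objective uniformly over all mean-field policies:
`lim_{N→∞} sup_{π∈Π} |J^N(π^N(π)) − J(π)| = 0`.
(The number of agents is written as `N + 1` so that the empirical distribution is
well-defined; the limit `N → ∞` is unaffected.) -/
theorem N_agent_objective_tendsto_mean_field
    {X U X0 : Type*} [Fintype X] [Fintype U] [Fintype X0]
    [Nonempty X] [Nonempty U] [Nonempty X0] [DecidableEq X] [DecidableEq U]
    (μ0 : ↥(stdSimplex ℝ X)) (μ00 : ↥(stdSimplex ℝ X0))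
    (P0 : X0 → ↥(stdSimplex ℝ (X × U)) → ↥(stdSimplex ℝ X0))
    (r : X0 → ↥(stdSimplex ℝ (X × U)) → ℝ)
    (γ : ℝ) (hγ : γ ∈ Set.Ioo (0 : ℝ) 1)
    -- Assumption 1: continuity of r and P⁰ in the state-action distribution
    (hr : ∀ x0, Continuous (r x0)) (hP0 : ∀ x0, Continuous (P0 x0)) :
    Tendsto (fun N : ℕ =>
        ⨆ π : ℕ → X0 → X → ↥(stdSimplex ℝ U),
          |JN N μ0 μ00 P0 r γ (fun _ => π) - JMF μ0 μ00 P0 r γ π|)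
      atTop (𝓝 0) :=
  N_agent_objective_tendsto_mean_field_general μ0 μ00 P0 r γ hγ hr hP0
end
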